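/- Let f = (f¹,…,f^{2n+1}) : ℝ^{2n+1} → ℝ^{2n+1} be a smooth contact map and set λ(f) := T f^{2n+1} + (1/2)·Σ_{l=1}^{2n} (w̃_l ∘ f)·T f^l. Then for every j = 1,…,2n: W_j(λ(f)) = Σ_{l=1}^{n} ( W_j f^{n+l}·T f^l − T f^{n+l}·W_j f^l ). -/

import Mathlib

open scoped BigOperators

/-- The index of the coordinate `w_j` (`j : Fin (2n)`) inside `Fin (2n+1)`. -/
def embIdx (n : ℕ) (j : Fin (2*n)) : Fin (2*n+1) := ⟨j, by have := j.isLt; omega⟩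

/-- The index of `w_j` for `j : Fin n` (the "first layer" indices `1,…,n`). -/
def loIdx (n : ℕ) (j : Fin n) : Fin (2*n) := ⟨j, by have := j.isLt; omega⟩

/-- The index of `w_{n+j}` for `j : Fin n` (the indices `n+1,…,2n`). -/
def hiIdx (n : ℕ) (j : Fin n) : Fin (2*n) := ⟨n + j, by have := j.isLt; omega⟩

/-- Partial derivative `∂_{w_i} g` at `p` (the last index `i = 2n` is the `t`-coordinate). -/
noncomputable def pderiv' (n : ℕ) (i : Fin (2*n+1))
    (g : (Fin (2*n+1) → ℝ) → ℝ) (p : Fin (2*n+1) → ℝ) : ℝ :=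
  fderiv ℝ g p (Pi.single i 1)

/-- The function `w̃_j`: `w̃_j(p) = p_{n+j}` for `1 ≤ j ≤ n` and `w̃_j(p) = −p_{j−n}`
for `n+1 ≤ j ≤ 2n` (here `j : Fin (2n)` is 0-based). -/
def wt (n : ℕ) (j : Fin (2*n)) (p : Fin (2*n+1) → ℝ) : ℝ :=
  if h : (j : ℕ) < n then p ⟨n + (j : ℕ), by omega⟩
  else - p ⟨(j : ℕ) - n, by have := j.isLt; omega⟩

/-- The horizontal vector field `W_j g := ∂_{w_j} g − (1/2)·w̃_j·∂_t g`. -/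
noncomputable def Wop (n : ℕ) (j : Fin (2*n))
    (g : (Fin (2*n+1) → ℝ) → ℝ) : (Fin (2*n+1) → ℝ) → ℝ :=
  fun p => pderiv' n (embIdx n j) g p - (1/2) * wt n j p * pderiv' n (Fin.last (2*n)) g p

/-- The vertical vector field `T g := ∂_t g`. -/
noncomputable def Tvert (n : ℕ)
    (g : (Fin (2*n+1) → ℝ) → ℝ) : (Fin (2*n+1) → ℝ) → ℝ :=
  fun p => pderiv' n (Fin.last (2*n)) g p

/-- A map `f : ℝ^{2n+1} → ℝ^{2n+1}` is contact if for every `j = 1,…,2n`,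
`W_j f^{2n+1} + (1/2)·Σ_{l=1}^{2n} (w̃_l ∘ f)·W_j f^l = 0` identically. -/
def IsContact (n : ℕ) (f : (Fin (2*n+1) → ℝ) → (Fin (2*n+1) → ℝ)) : Prop :=
  ∀ (j : Fin (2*n)) (p : Fin (2*n+1) → ℝ),
    Wop n j (fun q => f q (Fin.last (2*n))) p
      + (1/2) * ∑ l : Fin (2*n), wt n l (f p) * Wop n j (fun q => f q (embIdx n l)) p = 0


section Aux
variable {n : ℕ}

/-- sign of `w̃_l`. -/
noncomputable def sgn (n : ℕ) (l : Fin (2*n)) : ℝ := if (l : ℕ) < n then 1 else -1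

/-- coordinate index of `w̃_l`. -/
def wIdx (n : ℕ) (l : Fin (2*n)) : Fin (2*n+1) :=
  if h : (l : ℕ) < n then ⟨n + (l : ℕ), by omega⟩
  else ⟨(l : ℕ) - n, by have := l.isLt; omega⟩

lemma wt_eq (l : Fin (2*n)) (p : Fin (2*n+1) → ℝ) :
    wt n l p = sgn n l * p (wIdx n l) := by
  unfold wt sgn wIdx
  split <;> simp

lemma wIdx_ne_last (l : Fin (2*n)) : wIdx n l ≠ Fin.last (2*n) := by
  have := l.isLt
  unfold wIdx
  split <;> (intro h; have := congrArg Fin.val h; simp [Fin.last] at this; omega)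

lemma sgn_lo (m : Fin n) : sgn n (loIdx n m) = 1 := by
  simp [sgn, loIdx, m.isLt]

lemma sgn_hi (m : Fin n) : sgn n (hiIdx n m) = -1 := by
  have : ¬ (n + (m : ℕ) < n) := by omega
  simp [sgn, hiIdx, this]

lemma wIdx_lo (m : Fin n) : wIdx n (loIdx n m) = embIdx n (hiIdx n m) := by
  have hm := m.isLt
  apply Fin.ext
  simp [wIdx, loIdx, hiIdx, embIdx, hm]

lemma wIdx_hi (m : Fin n) : wIdx n (hiIdx n m) = embIdx n (loIdx n m) := by
  have : ¬ (n + (m : ℕ) < n) := by omega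
  apply Fin.ext
  simp [wIdx, loIdx, hiIdx, embIdx, this]

lemma contDiff_pderiv' {g : (Fin (2*n+1) → ℝ) → ℝ} (hg : ContDiff ℝ (⊤ : ℕ∞) g) (i : Fin (2*n+1)) :
    ContDiff ℝ (⊤ : ℕ∞) (pderiv' n i g) :=
  (hg.fderiv_right (by simp)).clm_apply contDiff_const

lemma pderiv'_comm {g : (Fin (2*n+1) → ℝ) → ℝ} (hg : ContDiff ℝ (⊤ : ℕ∞) g)
    (i k : Fin (2*n+1)) (p : Fin (2*n+1) → ℝ) :
    pderiv' n i (pderiv' n k g) p = pderiv' n k (pderiv' n i g) p := by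
  have hdg : Differentiable ℝ (fderiv ℝ g) := (hg.fderiv_right (m := (⊤ : ℕ∞)) (by simp)).differentiable (by simp)
  have key : ∀ v w : Fin (2*n+1) → ℝ,
      fderiv ℝ (fun q => fderiv ℝ g q v) p w = fderiv ℝ (fderiv ℝ g) p w v := by
    intro v w
    have h2 : HasFDerivAt (fun q => (ContinuousLinearMap.apply ℝ ℝ v) (fderiv ℝ g q))
        ((ContinuousLinearMap.apply ℝ ℝ v).comp (fderiv ℝ (fderiv ℝ g) p)) p :=
      (ContinuousLinearMap.apply ℝ ℝ v).hasFDerivAt.comp p (hdg p).hasFDerivAt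
    have := h2.fderiv
    simp only [ContinuousLinearMap.apply_apply] at this
    rw [this]; rfl
  have sym := second_derivative_symmetric (f := g) (f' := fderiv ℝ g)
    (f'' := fderiv ℝ (fderiv ℝ g) p)
    (fun y => ((hg.differentiable (by simp)) y).hasFDerivAt) (hdg p).hasFDerivAt
  unfold pderiv'
  rw [key, key]
  exact sym _ _

variable {g h : (Fin (2*n+1) → ℝ) → ℝ} {p : Fin (2*n+1) → ℝ}

lemma pderiv'_add (hg : DifferentiableAt ℝ g p) (hh : DifferentiableAt ℝ h p)
    (i : Fin (2*n+1)) :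
    pderiv' n i (fun q => g q + h q) p = pderiv' n i g p + pderiv' n i h p := by
  simp [pderiv', fderiv_fun_add hg hh]

lemma pderiv'_mul (hg : DifferentiableAt ℝ g p) (hh : DifferentiableAt ℝ h p)
    (i : Fin (2*n+1)) :
    pderiv' n i (fun q => g q * h q) p = pderiv' n i g p * h p + g p * pderiv' n i h p := by
  simp [pderiv', fderiv_fun_mul hg hh]
  ring

lemma pderiv'_const_mul (hg : DifferentiableAt ℝ g p) (c : ℝ) (i : Fin (2*n+1)) :
    pderiv' n i (fun q => c * g q) p = c * pderiv' n i g p := by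
  simp [pderiv', fderiv_const_mul hg c]

lemma pderiv'_sum {ι : Type*} (s : Finset ι) {G : ι → (Fin (2*n+1) → ℝ) → ℝ}
    (hG : ∀ l ∈ s, DifferentiableAt ℝ (G l) p) (i : Fin (2*n+1)) :
    pderiv' n i (fun q => ∑ l ∈ s, G l q) p = ∑ l ∈ s, pderiv' n i (G l) p := by
  simp [pderiv', fderiv_fun_sum hG]

lemma pderiv'_coord (m : Fin (2*n+1)) (i : Fin (2*n+1)) :
    pderiv' n i (fun q => q m) p = if m = i then 1 else 0 := by
  have : (fun q : Fin (2*n+1) → ℝ => q m)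
      = (ContinuousLinearMap.proj (R := ℝ) (φ := fun _ : Fin (2*n+1) => ℝ) m) := rfl
  rw [pderiv', this, ContinuousLinearMap.fderiv]
  simp [Pi.single_apply]

lemma contDiff_wt (l : Fin (2*n)) : ContDiff ℝ (⊤ : ℕ∞) (wt n l) := by
  have : wt n l = fun p => sgn n l * p (wIdx n l) := funext (wt_eq l)
  rw [this]
  exact contDiff_const.mul
    ((ContinuousLinearMap.proj (R := ℝ) (φ := fun _ : Fin (2*n+1) => ℝ) (wIdx n l)).contDiff)

lemma pderiv'_wt_last (l : Fin (2*n)) :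
    pderiv' n (Fin.last (2*n)) (wt n l) p = 0 := by
  have : wt n l = fun p => sgn n l * p (wIdx n l) := funext (wt_eq l)
  rw [this, pderiv'_const_mul, pderiv'_coord]
  · simp [wIdx_ne_last l]
  · exact ((ContinuousLinearMap.proj (R := ℝ)
      (φ := fun _ : Fin (2*n+1) => ℝ) (wIdx n l)).differentiable).differentiableAt

lemma contDiff_Wop {g : (Fin (2*n+1) → ℝ) → ℝ} (hg : ContDiff ℝ (⊤ : ℕ∞) g) (j : Fin (2*n)) :
    ContDiff ℝ (⊤ : ℕ∞) (Wop n j g) := by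
  unfold Wop
  exact ((contDiff_pderiv' hg _).sub
    ((contDiff_const.mul (contDiff_wt j)).mul (contDiff_pderiv' hg _)))

lemma Wop_add (hg : DifferentiableAt ℝ g p) (hh : DifferentiableAt ℝ h p) (j : Fin (2*n)) :
    Wop n j (fun q => g q + h q) p = Wop n j g p + Wop n j h p := by
  simp only [Wop, pderiv'_add hg hh]; ring

lemma Wop_mul (hg : DifferentiableAt ℝ g p) (hh : DifferentiableAt ℝ h p) (j : Fin (2*n)) :
    Wop n j (fun q => g q * h q) p = Wop n j g p * h p + g p * Wop n j h p := by
  simp only [Wop, pderiv'_mul hg hh]; ring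

lemma Wop_const_mul (hg : DifferentiableAt ℝ g p) (c : ℝ) (j : Fin (2*n)) :
    Wop n j (fun q => c * g q) p = c * Wop n j g p := by
  simp only [Wop, pderiv'_const_mul hg c]; ring

lemma Wop_sum {ι : Type*} (s : Finset ι) {G : ι → (Fin (2*n+1) → ℝ) → ℝ}
    (hG : ∀ l ∈ s, DifferentiableAt ℝ (G l) p) (j : Fin (2*n)) :
    Wop n j (fun q => ∑ l ∈ s, G l q) p = ∑ l ∈ s, Wop n j (G l) p := by
  simp only [Wop, pderiv'_sum s hG]
  rw [Finset.mul_sum, Finset.sum_sub_distrib]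

lemma Tvert_eq : Tvert n g = pderiv' n (Fin.last (2*n)) g := rfl

lemma Wop_Tvert_comm (hg : ContDiff ℝ (⊤ : ℕ∞) g) (j : Fin (2*n)) (p : Fin (2*n+1) → ℝ) :
    Wop n j (Tvert n g) p = Tvert n (Wop n j g) p := by
  have h1 : ContDiff ℝ (⊤ : ℕ∞) (pderiv' n (embIdx n j) g) := contDiff_pderiv' hg _
  have h2 : ContDiff ℝ (⊤ : ℕ∞) (pderiv' n (Fin.last (2*n)) g) := contDiff_pderiv' hg _
  have hwt : ContDiff ℝ (⊤ : ℕ∞) (fun q => (1/2 : ℝ) * wt n j q) := contDiff_const.mul (contDiff_wt j)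
  have step : Tvert n (Wop n j g) p
      = pderiv' n (Fin.last (2*n)) (pderiv' n (embIdx n j) g) p
        - (1/2) * wt n j p * pderiv' n (Fin.last (2*n)) (pderiv' n (Fin.last (2*n)) g) p := by
    rw [Tvert_eq]
    have : Wop n j g = fun q =>
        pderiv' n (embIdx n j) g q
          + -(((1/2 : ℝ) * wt n j q) * pderiv' n (Fin.last (2*n)) g q) := by
      funext q; simp [Wop]; ring
    rw [this, pderiv'_add (h1.differentiable (by simp) p)
      (((hwt.mul h2).differentiable (by simp) p).fun_neg) _]
    have hneg : pderiv' n (Fin.last (2*n))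
        (fun q => -(((1/2 : ℝ) * wt n j q) * pderiv' n (Fin.last (2*n)) g q)) p
        = - pderiv' n (Fin.last (2*n))
        (fun q => ((1/2 : ℝ) * wt n j q) * pderiv' n (Fin.last (2*n)) g q) p := by
      simp [pderiv', fderiv_neg]
    rw [hneg, pderiv'_mul ((hwt.differentiable (by simp)) p) ((h2.differentiable (by simp)) p),
      pderiv'_const_mul (((contDiff_wt j).differentiable (by simp)) p), pderiv'_wt_last]
    ring
  rw [step]
  simp only [Wop, Tvert_eq]
  rw [pderiv'_comm hg]

lemma sum_fin_split (G : Fin (2*n) → ℝ) :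
    ∑ l, G l = ∑ m : Fin n, G (loIdx n m) + ∑ m : Fin n, G (hiIdx n m) := by
  classical
  have hbij : Function.Bijective (Sum.elim (loIdx n) (hiIdx n)) := by
    rw [Fintype.bijective_iff_injective_and_card]
    constructor
    · rintro (a | a) (b | b) hab <;>
        (have := congrArg Fin.val hab; simp [loIdx, hiIdx] at this) <;>
        first
          | exact congrArg Sum.inl (Fin.ext (by omega))
          | exact congrArg Sum.inr (Fin.ext (by omega))
          | (exfalso; have h1 := a.isLt; have h2 := b.isLt; omega)
    · simp [two_mul]
  have := Fintype.sum_bijective _ hbij (fun x => G (Sum.elim (loIdx n) (hiIdx n) x)) G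
    (fun x => rfl)
  rw [← this, Fintype.sum_sum_type]
  rfl

end Aux

/-- Derivative of `λ(f) := T f^{2n+1} + (1/2)·Σ_{l=1}^{2n} (w̃_l ∘ f)·T f^l` along a smooth
contact map: for every `j = 1,…,2n`,
`W_j(λ(f)) = Σ_{l=1}^{n} ( W_j f^{n+l}·T f^l − T f^{n+l}·W_j f^l )`. -/
theorem Wop_lambda (n : ℕ)
    (f : (Fin (2*n+1) → ℝ) → (Fin (2*n+1) → ℝ))
    (hf : ContDiff ℝ (⊤ : ℕ∞) f) (hcontact : IsContact n f)
    (j : Fin (2*n)) (p : Fin (2*n+1) → ℝ) :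
    Wop n j
        (fun q => Tvert n (fun r => f r (Fin.last (2*n))) q
          + (1/2) * ∑ l : Fin (2*n), wt n l (f q) * Tvert n (fun r => f r (embIdx n l)) q) p
      = ∑ l : Fin n,
          (Wop n j (fun q => f q (embIdx n (hiIdx n l))) p
              * Tvert n (fun q => f q (embIdx n (loIdx n l))) p
            - Tvert n (fun q => f q (embIdx n (hiIdx n l))) p
              * Wop n j (fun q => f q (embIdx n (loIdx n l))) p) := by
  classical
  have hF : ∀ i : Fin (2*n+1), ContDiff ℝ (⊤ : ℕ∞) (fun q : Fin (2*n+1) → ℝ => f q i) := fun i =>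
    (ContinuousLinearMap.proj (R := ℝ) (φ := fun _ : Fin (2*n+1) => ℝ) i).contDiff.comp hf
  have hAeq : ∀ l : Fin (2*n),
      (fun q : Fin (2*n+1) → ℝ => wt n l (f q)) = fun q => sgn n l * f q (wIdx n l) :=
    fun l => funext fun q => wt_eq l (f q)
  have hA : ∀ l : Fin (2*n), ContDiff ℝ (⊤ : ℕ∞) (fun q : Fin (2*n+1) → ℝ => wt n l (f q)) := fun l => by
    rw [hAeq l]; exact contDiff_const.mul (hF _)
  have hB : ∀ i : Fin (2*n+1), ContDiff ℝ (⊤ : ℕ∞) (Tvert n (fun q => f q i)) := fun i => by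
    rw [Tvert_eq]; exact contDiff_pderiv' (hF i) _
  have hW : ∀ i : Fin (2*n+1), ContDiff ℝ (⊤ : ℕ∞) (Wop n j (fun q => f q i)) := fun i =>
    contDiff_Wop (hF i) j
  have hProd : ∀ l : Fin (2*n),
      ContDiff ℝ (⊤ : ℕ∞) (fun q => wt n l (f q) * Tvert n (fun r => f r (embIdx n l)) q) :=
    fun l => (hA l).mul (hB _)
  have hSum : ContDiff ℝ (⊤ : ℕ∞)
      (fun q => ∑ l : Fin (2*n), wt n l (f q) * Tvert n (fun r => f r (embIdx n l)) q) :=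
    ContDiff.sum fun l _ => hProd l
  have hCSum : ContDiff ℝ (⊤ : ℕ∞)
      (fun q => (1/2 : ℝ) * ∑ l : Fin (2*n), wt n l (f q) * Tvert n (fun r => f r (embIdx n l)) q) :=
    contDiff_const.mul hSum
  have hProd2 : ∀ l : Fin (2*n),
      ContDiff ℝ (⊤ : ℕ∞) (fun q => wt n l (f q) * Wop n j (fun r => f r (embIdx n l)) q) :=
    fun l => (hA l).mul (hW _)
  have hSum2 : ContDiff ℝ (⊤ : ℕ∞)
      (fun q => ∑ l : Fin (2*n), wt n l (f q) * Wop n j (fun r => f r (embIdx n l)) q) :=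
    ContDiff.sum fun l _ => hProd2 l
  have hCSum2 : ContDiff ℝ (⊤ : ℕ∞)
      (fun q => (1/2 : ℝ) * ∑ l : Fin (2*n), wt n l (f q) * Wop n j (fun r => f r (embIdx n l)) q) :=
    contDiff_const.mul hSum2
  -- Step 1: expand the left-hand side
  have e1 : Wop n j
        (fun q => Tvert n (fun r => f r (Fin.last (2*n))) q
          + (1/2) * ∑ l : Fin (2*n), wt n l (f q) * Tvert n (fun r => f r (embIdx n l)) q) p
      = Tvert n (Wop n j (fun r => f r (Fin.last (2*n)))) p
        + (1/2) * ∑ l : Fin (2*n),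
            (Wop n j (fun q => wt n l (f q)) p * Tvert n (fun r => f r (embIdx n l)) p
              + wt n l (f p) * Tvert n (Wop n j (fun r => f r (embIdx n l))) p) := by
    have s1 : Wop n j
        (fun q => Tvert n (fun r => f r (Fin.last (2*n))) q
          + (1/2) * ∑ l : Fin (2*n), wt n l (f q) * Tvert n (fun r => f r (embIdx n l)) q) p
        = Wop n j (Tvert n (fun r => f r (Fin.last (2*n)))) p
          + Wop n j (fun q => (1/2 : ℝ) * ∑ l : Fin (2*n),
              wt n l (f q) * Tvert n (fun r => f r (embIdx n l)) q) p :=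
      Wop_add ((hB _).differentiable (by simp) p) (hCSum.differentiable (by simp) p) j
    have s2 : Wop n j (fun q => (1/2 : ℝ) * ∑ l : Fin (2*n),
          wt n l (f q) * Tvert n (fun r => f r (embIdx n l)) q) p
        = (1/2 : ℝ) * Wop n j (fun q => ∑ l : Fin (2*n),
            wt n l (f q) * Tvert n (fun r => f r (embIdx n l)) q) p :=
      Wop_const_mul (hSum.differentiable (by simp) p) (1/2 : ℝ) j
    have s3 : Wop n j (fun q => ∑ l : Fin (2*n),
          wt n l (f q) * Tvert n (fun r => f r (embIdx n l)) q) p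
        = ∑ l : Fin (2*n),
            Wop n j (fun q => wt n l (f q) * Tvert n (fun r => f r (embIdx n l)) q) p :=
      Wop_sum Finset.univ (fun l _ => (hProd l).differentiable (by simp) p) j
    have s4 : ∀ l : Fin (2*n),
        Wop n j (fun q => wt n l (f q) * Tvert n (fun r => f r (embIdx n l)) q) p
          = Wop n j (fun q => wt n l (f q)) p * Tvert n (fun r => f r (embIdx n l)) p
            + wt n l (f p) * Tvert n (Wop n j (fun r => f r (embIdx n l))) p := fun l => by
      have := Wop_mul ((hA l).differentiable (by simp) p) ((hB (embIdx n l)).differentiable (by simp) p) j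
      rw [this, Wop_Tvert_comm (hF (embIdx n l)) j p]
    rw [s1, s2, s3, Finset.sum_congr rfl fun l _ => s4 l,
      Wop_Tvert_comm (hF (Fin.last (2*n))) j p]
  -- Step 2: differentiate the contact condition in the vertical direction
  have hC : (fun q => Wop n j (fun r => f r (Fin.last (2*n))) q
      + (1/2) * ∑ l : Fin (2*n), wt n l (f q) * Wop n j (fun r => f r (embIdx n l)) q)
      = (fun _ : Fin (2*n+1) → ℝ => (0:ℝ)) := funext fun q => hcontact j q
  have e2 : Tvert n (Wop n j (fun r => f r (Fin.last (2*n)))) p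
      + (1/2) * ∑ l : Fin (2*n),
          (Tvert n (fun q => wt n l (f q)) p * Wop n j (fun r => f r (embIdx n l)) p
            + wt n l (f p) * Tvert n (Wop n j (fun r => f r (embIdx n l))) p) = 0 := by
    have t1 : Tvert n (fun q => Wop n j (fun r => f r (Fin.last (2*n))) q
        + (1/2) * ∑ l : Fin (2*n), wt n l (f q) * Wop n j (fun r => f r (embIdx n l)) q) p
        = 0 := by
      rw [hC]
      simp [Tvert, pderiv']
    have t2 : Tvert n (fun q => Wop n j (fun r => f r (Fin.last (2*n))) q
        + (1/2) * ∑ l : Fin (2*n), wt n l (f q) * Wop n j (fun r => f r (embIdx n l)) q) p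
        = Tvert n (Wop n j (fun r => f r (Fin.last (2*n)))) p
          + Tvert n (fun q => (1/2 : ℝ) * ∑ l : Fin (2*n),
              wt n l (f q) * Wop n j (fun r => f r (embIdx n l)) q) p :=
      pderiv'_add ((hW _).differentiable (by simp) p) (hCSum2.differentiable (by simp) p) _
    have t3 : Tvert n (fun q => (1/2 : ℝ) * ∑ l : Fin (2*n),
          wt n l (f q) * Wop n j (fun r => f r (embIdx n l)) q) p
        = (1/2 : ℝ) * Tvert n (fun q => ∑ l : Fin (2*n),
            wt n l (f q) * Wop n j (fun r => f r (embIdx n l)) q) p :=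
      pderiv'_const_mul (hSum2.differentiable (by simp) p) (1/2 : ℝ) _
    have t4 : Tvert n (fun q => ∑ l : Fin (2*n),
          wt n l (f q) * Wop n j (fun r => f r (embIdx n l)) q) p
        = ∑ l : Fin (2*n),
            Tvert n (fun q => wt n l (f q) * Wop n j (fun r => f r (embIdx n l)) q) p :=
      pderiv'_sum Finset.univ (fun l _ => (hProd2 l).differentiable (by simp) p) _
    have t5 : ∀ l : Fin (2*n),
        Tvert n (fun q => wt n l (f q) * Wop n j (fun r => f r (embIdx n l)) q) p
          = Tvert n (fun q => wt n l (f q)) p * Wop n j (fun r => f r (embIdx n l)) p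
            + wt n l (f p) * Tvert n (Wop n j (fun r => f r (embIdx n l))) p := fun l =>
      pderiv'_mul ((hA l).differentiable (by simp) p) ((hW (embIdx n l)).differentiable (by simp) p) _
    rw [t2, t3, t4, Finset.sum_congr rfl fun l _ => t5 l] at t1
    exact t1
  -- Step 3: the `w̃`-composition derivative identities
  have hWA : ∀ l : Fin (2*n), Wop n j (fun q => wt n l (f q)) p
      = sgn n l * Wop n j (fun q => f q (wIdx n l)) p := fun l => by
    rw [hAeq l]
    exact Wop_const_mul ((hF _).differentiable (by simp) p) _ j
  have hTA : ∀ l : Fin (2*n), Tvert n (fun q => wt n l (f q)) p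
      = sgn n l * Tvert n (fun q => f q (wIdx n l)) p := fun l => by
    rw [hAeq l]
    exact pderiv'_const_mul ((hF _).differentiable (by simp) p) _ _
  -- Step 4: sum combinatorics
  have k1 : ∑ l : Fin (2*n),
        ((Wop n j (fun q => wt n l (f q)) p * Tvert n (fun r => f r (embIdx n l)) p
            + wt n l (f p) * Tvert n (Wop n j (fun r => f r (embIdx n l))) p)
          - (Tvert n (fun q => wt n l (f q)) p * Wop n j (fun r => f r (embIdx n l)) p
            + wt n l (f p) * Tvert n (Wop n j (fun r => f r (embIdx n l))) p))
      = (∑ l : Fin (2*n),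
          (Wop n j (fun q => wt n l (f q)) p * Tvert n (fun r => f r (embIdx n l)) p
            + wt n l (f p) * Tvert n (Wop n j (fun r => f r (embIdx n l))) p))
        - ∑ l : Fin (2*n),
          (Tvert n (fun q => wt n l (f q)) p * Wop n j (fun r => f r (embIdx n l)) p
            + wt n l (f p) * Tvert n (Wop n j (fun r => f r (embIdx n l))) p) :=
    Finset.sum_sub_distrib _ _
  have k2 : ∑ l : Fin (2*n),
        ((Wop n j (fun q => wt n l (f q)) p * Tvert n (fun r => f r (embIdx n l)) p
            + wt n l (f p) * Tvert n (Wop n j (fun r => f r (embIdx n l))) p)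
          - (Tvert n (fun q => wt n l (f q)) p * Wop n j (fun r => f r (embIdx n l)) p
            + wt n l (f p) * Tvert n (Wop n j (fun r => f r (embIdx n l))) p))
      = ∑ l : Fin (2*n),
          (Wop n j (fun q => wt n l (f q)) p * Tvert n (fun r => f r (embIdx n l)) p
            - Tvert n (fun q => wt n l (f q)) p * Wop n j (fun r => f r (embIdx n l)) p) :=
    Finset.sum_congr rfl fun l _ => by ring
  have k3 : ∑ l : Fin (2*n),
        (Wop n j (fun q => wt n l (f q)) p * Tvert n (fun r => f r (embIdx n l)) p
          - Tvert n (fun q => wt n l (f q)) p * Wop n j (fun r => f r (embIdx n l)) p)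
      = ∑ l : Fin (2*n),
          (sgn n l * Wop n j (fun q => f q (wIdx n l)) p * Tvert n (fun r => f r (embIdx n l)) p
            - sgn n l * Tvert n (fun q => f q (wIdx n l)) p
                * Wop n j (fun r => f r (embIdx n l)) p) :=
    Finset.sum_congr rfl fun l _ => by rw [hWA l, hTA l]
  have k4 : ∑ l : Fin (2*n),
        (sgn n l * Wop n j (fun q => f q (wIdx n l)) p * Tvert n (fun r => f r (embIdx n l)) p
          - sgn n l * Tvert n (fun q => f q (wIdx n l)) p * Wop n j (fun r => f r (embIdx n l)) p)
      = (∑ m : Fin n,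
          (sgn n (loIdx n m) * Wop n j (fun q => f q (wIdx n (loIdx n m))) p
              * Tvert n (fun r => f r (embIdx n (loIdx n m))) p
            - sgn n (loIdx n m) * Tvert n (fun q => f q (wIdx n (loIdx n m))) p
              * Wop n j (fun r => f r (embIdx n (loIdx n m))) p))
        + ∑ m : Fin n,
          (sgn n (hiIdx n m) * Wop n j (fun q => f q (wIdx n (hiIdx n m))) p
              * Tvert n (fun r => f r (embIdx n (hiIdx n m))) p
            - sgn n (hiIdx n m) * Tvert n (fun q => f q (wIdx n (hiIdx n m))) p
              * Wop n j (fun r => f r (embIdx n (hiIdx n m))) p) :=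
    sum_fin_split _
  have k5 : ∑ m : Fin n,
        (sgn n (loIdx n m) * Wop n j (fun q => f q (wIdx n (loIdx n m))) p
            * Tvert n (fun r => f r (embIdx n (loIdx n m))) p
          - sgn n (loIdx n m) * Tvert n (fun q => f q (wIdx n (loIdx n m))) p
            * Wop n j (fun r => f r (embIdx n (loIdx n m))) p)
      = ∑ l : Fin n,
          (Wop n j (fun q => f q (embIdx n (hiIdx n l))) p
              * Tvert n (fun q => f q (embIdx n (loIdx n l))) p
            - Tvert n (fun q => f q (embIdx n (hiIdx n l))) p
              * Wop n j (fun q => f q (embIdx n (loIdx n l))) p) :=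
    Finset.sum_congr rfl fun m _ => by rw [sgn_lo, wIdx_lo]; ring
  have k6 : ∑ m : Fin n,
        (sgn n (hiIdx n m) * Wop n j (fun q => f q (wIdx n (hiIdx n m))) p
            * Tvert n (fun r => f r (embIdx n (hiIdx n m))) p
          - sgn n (hiIdx n m) * Tvert n (fun q => f q (wIdx n (hiIdx n m))) p
            * Wop n j (fun r => f r (embIdx n (hiIdx n m))) p)
      = ∑ l : Fin n,
          (Wop n j (fun q => f q (embIdx n (hiIdx n l))) p
              * Tvert n (fun q => f q (embIdx n (loIdx n l))) p
            - Tvert n (fun q => f q (embIdx n (hiIdx n l))) p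
              * Wop n j (fun q => f q (embIdx n (loIdx n l))) p) :=
    Finset.sum_congr rfl fun m _ => by rw [sgn_hi, wIdx_hi]; ring
  rw [e1]
  linarith [e2, k1, k2, k3, k4, k5, k6]
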